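/- arXiv:1307.1448 — 2 statements merged into one kernel-verified Lean document; each statement's English description precedes it below -/
import Mathlib

section
/- Let σ_k² > 0, a_k > 0, A > 0 for k = 1,…,N and suppose Σ_k 1/σ_k² > 1/ε. Then the optimization problem: minimize Σ_k p_k subject to Σ_{k=1}^N 1/(σ_k² + A²/(3(1 + p_k a_k))) ≥ 1/ε and p_k ≥ 0, is a convex problem (the constraint function is concave in p), and assuming interior optimality its solution is p_k* = max(0, (1/σ_k²)·√(λA²/(3a_k)) − 1/a_k − A²/(3 a_k σ_k²)) for the Lagrange multiplier λ > 0 chosen so the MSE constraint holds with equality. -/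
open BigOperators

private lemma aux_rw (σ A s : ℝ) (hσ : 0 < σ) (hs : 0 < s) :
    1 / (σ ^ 2 + A ^ 2 / (3 * s)) = 3 * s / (3 * σ ^ 2 * s + A ^ 2) := by
  have h2 : (0:ℝ) < σ ^ 2 + A ^ 2 / (3 * s) :=
    add_pos_of_pos_of_nonneg (by positivity) (by positivity)
  rw [div_eq_div_iff (ne_of_gt h2) (by positivity)]
  field_simp

private lemma concave_key (σ A u v θ η : ℝ) (hσ : 0 < σ) (hu : 0 < u) (hv : 0 < v)
    (hθ : 0 ≤ θ) (hη : 0 ≤ η) (hsum : θ + η = 1) :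
    θ * (3 * u / (3 * σ ^ 2 * u + A ^ 2)) + η * (3 * v / (3 * σ ^ 2 * v + A ^ 2))
      ≤ 3 * (θ * u + η * v) / (3 * σ ^ 2 * (θ * u + η * v) + A ^ 2) := by
  have hη' : η = 1 - θ := by linarith
  subst hη'
  have hθ1 : θ ≤ 1 := by linarith
  have Du : 0 < 3 * σ ^ 2 * u + A ^ 2 := by positivity
  have Dv : 0 < 3 * σ ^ 2 * v + A ^ 2 := by positivity
  have hw : 0 < θ * u + (1 - θ) * v := by
    rcases lt_or_eq_of_le hθ1 with h | h
    · nlinarith [mul_nonneg hθ hu.le, mul_pos (by linarith : (0:ℝ) < 1 - θ) hv]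
    · nlinarith
  have Dw : 0 < 3 * σ ^ 2 * (θ * u + (1 - θ) * v) + A ^ 2 := by positivity
  rw [← mul_div_assoc, ← mul_div_assoc, div_add_div _ _ (ne_of_gt Du) (ne_of_gt Dv),
    div_le_div_iff₀ (by positivity) Dw]
  nlinarith [mul_nonneg (mul_nonneg hθ hη) (sq_nonneg ((u - v) * σ * A)),
    mul_pos Du Dv, sq_nonneg (u - v)]

private lemma grad_key (σ A s s0 : ℝ) (hσ : 0 < σ) (hs : 0 < s) (hs0 : 0 < s0) :
    3 * s / (3 * σ ^ 2 * s + A ^ 2) - 3 * s0 / (3 * σ ^ 2 * s0 + A ^ 2)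
      ≤ 3 * A ^ 2 * (s - s0) / (3 * σ ^ 2 * s0 + A ^ 2) ^ 2 := by
  have Ds : 0 < 3 * σ ^ 2 * s + A ^ 2 := by positivity
  have Ds0 : 0 < 3 * σ ^ 2 * s0 + A ^ 2 := by positivity
  rw [div_sub_div _ _ (ne_of_gt Ds) (ne_of_gt Ds0), div_le_div_iff₀ (by positivity) (by positivity)]
  nlinarith [mul_nonneg (sq_nonneg ((s - s0) * σ * A)) Ds0.le]

set_option maxHeartbeats 1000000 in
private lemma per_k (σ a A lam p q : ℝ) (hσ : 0 < σ) (ha : 0 < a) (hA : 0 < A)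
    (hlam : 0 < lam) (hq : 0 ≤ q)
    (hp : p = max 0 ((1 / σ ^ 2) * Real.sqrt (lam * A ^ 2 / (3 * a))
        - 1 / a - A ^ 2 / (3 * a * σ ^ 2))) :
    lam * (1 / (σ ^ 2 + A ^ 2 / (3 * (1 + q * a)))
        - 1 / (σ ^ 2 + A ^ 2 / (3 * (1 + p * a)))) ≤ q - p := by
  have hp0 : 0 ≤ p := hp ▸ le_max_left _ _
  have hs : (0:ℝ) < 1 + q * a := by nlinarith
  have hs0 : (0:ℝ) < 1 + p * a := by nlinarith
  set r := Real.sqrt (lam * A ^ 2 / (3 * a)) with hr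
  have hrsq : r ^ 2 = lam * A ^ 2 / (3 * a) := Real.sq_sqrt (by positivity)
  have hrpos : 0 < r := Real.sqrt_pos.mpr (by positivity)
  have hlA : lam * A ^ 2 = 3 * a * r ^ 2 := by rw [hrsq]; field_simp
  set D0 := 3 * σ ^ 2 * (1 + p * a) + A ^ 2 with hD0
  have hD0pos : 0 < D0 := by positivity
  have hkkt : lam * (3 * A ^ 2 * a) ≤ D0 ^ 2 ∧ (0 < p → D0 ^ 2 = lam * (3 * A ^ 2 * a)) := by
    rcases le_or_gt ((1 / σ ^ 2) * r - 1 / a - A ^ 2 / (3 * a * σ ^ 2)) 0 with hE | hE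
    · have hpz : p = 0 := by rw [hp, max_eq_left hE]
      refine ⟨?_, fun hpp => absurd (hpz ▸ hpp) (lt_irrefl 0)⟩
      have h2 : 1 / σ ^ 2 * r ≤ 1 / a + A ^ 2 / (3 * a * σ ^ 2) := by linarith
      have h3 := mul_le_mul_of_nonneg_left h2 (show (0:ℝ) ≤ 3 * a * σ ^ 2 by positivity)
      have e1 : 3 * a * σ ^ 2 * (1 / σ ^ 2 * r) = 3 * a * r := by field_simp
      have e2 : 3 * a * σ ^ 2 * (1 / a + A ^ 2 / (3 * a * σ ^ 2)) = 3 * σ ^ 2 + A ^ 2 := by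
        field_simp
      rw [e1, e2] at h3
      rw [hD0, hpz]
      have e3 : lam * (3 * A ^ 2 * a) = 9 * a ^ 2 * r ^ 2 := by
        linear_combination 3 * a * hlA
      rw [e3]
      nlinarith [mul_pos ha hrpos]
    · have hpE : p = (1 / σ ^ 2) * r - 1 / a - A ^ 2 / (3 * a * σ ^ 2) := by
        rw [hp, max_eq_right (le_of_lt hE)]
      have hDeq : D0 = 3 * a * r := by
        rw [hD0, hpE]; field_simp; ring
      have hsq : D0 ^ 2 = lam * (3 * A ^ 2 * a) := by
        rw [hDeq]; linear_combination (-3) * a * hlA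
      exact ⟨le_of_eq hsq.symm, fun _ => hsq⟩
  rw [aux_rw σ A _ hσ hs, aux_rw σ A _ hσ hs0]
  have hgrad := grad_key σ A (1 + q * a) (1 + p * a) hσ hs hs0
  have hdiff : (1 + q * a) - (1 + p * a) = a * (q - p) := by ring
  rw [hdiff] at hgrad
  have h1 : lam * (3 * (1 + q * a) / (3 * σ ^ 2 * (1 + q * a) + A ^ 2)
      - 3 * (1 + p * a) / (3 * σ ^ 2 * (1 + p * a) + A ^ 2))
      ≤ lam * (3 * A ^ 2 * (a * (q - p)) / D0 ^ 2) :=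
    mul_le_mul_of_nonneg_left hgrad (le_of_lt hlam)
  refine le_trans h1 ?_
  have e : lam * (3 * A ^ 2 * (a * (q - p)) / D0 ^ 2) = lam * (3 * A ^ 2 * a) * (q - p) / D0 ^ 2 := by
    ring
  rw [e]
  rcases eq_or_lt_of_le hp0 with hpz | hpp
  · have hq0 : 0 ≤ q - p := by rw [← hpz]; simpa using hq
    rw [div_le_iff₀ (by positivity)]
    nlinarith [mul_le_mul_of_nonneg_left hkkt.1 hq0]
  · rw [hkkt.2 hpp]
    have : lam * (3 * A ^ 2 * a) * (q - p) / (lam * (3 * A ^ 2 * a)) = q - p := by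
      field_simp
    rw [this]

theorem power_allocation_convexity_and_optimality {N : ℕ}
    (σ a : Fin N → ℝ) (A ε lam : ℝ)
    (hσ : ∀ k, 0 < σ k) (ha : ∀ k, 0 < a k) (hA : 0 < A) (hε : 0 < ε)
    (hfeas : 1 / ε < ∑ k, 1 / (σ k) ^ 2) (hlam : 0 < lam)
    (pstar : Fin N → ℝ)
    (hpstar : ∀ k, pstar k
      = max 0 ((1 / (σ k) ^ 2) * Real.sqrt (lam * A ^ 2 / (3 * a k))
          - 1 / a k - A ^ 2 / (3 * a k * (σ k) ^ 2)))
    (heq : ∑ k, 1 / ((σ k) ^ 2 + A ^ 2 / (3 * (1 + pstar k * a k))) = 1 / ε) :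
    ConcaveOn ℝ {p : Fin N → ℝ | ∀ k, 0 ≤ p k}
      (fun p => ∑ k, 1 / ((σ k) ^ 2 + A ^ 2 / (3 * (1 + p k * a k)))) ∧
    ∀ p : Fin N → ℝ, (∀ k, 0 ≤ p k) →
      1 / ε ≤ ∑ k, 1 / ((σ k) ^ 2 + A ^ 2 / (3 * (1 + p k * a k))) →
      ∑ k, pstar k ≤ ∑ k, p k := by
  constructor
  · constructor
    · intro x hx y hy θ η hθ hη hsum k
      have := hx k
      have := hy k
      simp only [Pi.add_apply, Pi.smul_apply, smul_eq_mul]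
      positivity
    · intro x hx y hy θ η hθ hη hsum
      simp only [smul_eq_mul, Pi.add_apply, Pi.smul_apply]
      rw [Finset.mul_sum, Finset.mul_sum, ← Finset.sum_add_distrib]
      apply Finset.sum_le_sum
      intro k _
      have hu : (0:ℝ) < 1 + x k * a k := by nlinarith [hx k, ha k]
      have hv : (0:ℝ) < 1 + y k * a k := by nlinarith [hy k, ha k]
      have hw : (0:ℝ) < 1 + (θ * x k + η * y k) * a k := by
        nlinarith [hx k, hy k, ha k, mul_nonneg hθ (hx k), mul_nonneg hη (hy k)]
      rw [aux_rw (σ k) A _ (hσ k) hu, aux_rw (σ k) A _ (hσ k) hv,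
        aux_rw (σ k) A _ (hσ k) hw]
      have key := concave_key (σ k) A (1 + x k * a k) (1 + y k * a k) θ η (hσ k) hu hv hθ hη hsum
      have hrw : θ * (1 + x k * a k) + η * (1 + y k * a k)
          = 1 + (θ * x k + η * y k) * a k := by nlinarith
      rw [hrw] at key
      convert key using 2
  · intro p hp hcon
    have key : ∀ k ∈ Finset.univ, lam * (1 / ((σ k) ^ 2 + A ^ 2 / (3 * (1 + p k * a k)))
        - 1 / ((σ k) ^ 2 + A ^ 2 / (3 * (1 + pstar k * a k)))) ≤ p k - pstar k := by
      intro k _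
      exact per_k (σ k) (a k) A lam (pstar k) (p k) (hσ k) (ha k) hA hlam (hp k) (hpstar k)
    have hsumkey := Finset.sum_le_sum key
    rw [← Finset.mul_sum, Finset.sum_sub_distrib] at hsumkey
    rw [Finset.sum_sub_distrib, heq] at hsumkey
    have h0 : 0 ≤ lam * ((∑ k, 1 / ((σ k) ^ 2 + A ^ 2 / (3 * (1 + p k * a k)))) - 1 / ε) :=
      mul_nonneg (le_of_lt hlam) (by linarith)
    linarith
end

section
/- Let W ∈ ℝ^{N×N} and let P be the orthogonal projector onto the range of a full-column-rank matrix U ∈ ℝ^{N×r}. Then lim_{k→∞} W^k = P if and only if the three conditions hold: (C1) W·P = P, (C2) P·W = P, and (C3) the spectral radius of W - P is strictly less than 1. -/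
open Matrix Filter Topology

/-! If `P` is idempotent, passing to the limit in `W ^ (k + 1) = W * W ^ k = W ^ k * W` shows that
`W ^ k → P` forces `W * P = P = P * W`, and under these relations
`(W - P) ^ (k + 1) = W ^ (k + 1) - P`. Hence `W ^ k → P` iff `W * P = P = P * W` and
`(W - P) ^ k → 0`. By Gelfand's formula, the powers of an element of a complex Banach algebra tend
to `0` exactly when its spectrum lies in the open unit disc; a real matrix is viewed as a complex
one, which changes neither its powers nor their convergence. -/

section TopologicalRing

variable {R : Type*} [Ring R] {w p : R}

theorem IsIdempotentElem.sub_pow_succ (hp : IsIdempotentElem p) (hwp : w * p = p)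
    (hpw : p * w = p) (k : ℕ) : (w - p) ^ (k + 1) = w ^ (k + 1) - p := by
  have hpow : ∀ j : ℕ, w ^ j * p = p := fun j => by
    induction j with
    | zero => rw [pow_zero, one_mul]
    | succ j ih => rw [pow_succ, mul_assoc, hwp, ih]
  induction k with
  | zero => simp
  | succ k ih =>
    rw [pow_succ, ih, sub_mul, mul_sub, mul_sub, ← pow_succ, hpow, hpw, hp.eq]
    abel

variable [TopologicalSpace R] [IsTopologicalRing R] [T2Space R]

theorem IsIdempotentElem.tendsto_pow_nhds_iff (hp : IsIdempotentElem p) :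
    Tendsto (w ^ ·) atTop (𝓝 p) ↔
      w * p = p ∧ p * w = p ∧ Tendsto ((w - p) ^ ·) atTop (𝓝 0) := by
  constructor
  · intro h
    have hsucc : Tendsto (fun k => w ^ (k + 1)) atTop (𝓝 p) :=
      (tendsto_add_atTop_iff_nat 1).2 h
    have hwp : w * p = p :=
      tendsto_nhds_unique (by simpa only [← pow_succ'] using h.const_mul w) hsucc
    have hpw : p * w = p :=
      tendsto_nhds_unique (by simpa only [← pow_succ] using h.mul_const w) hsucc
    refine ⟨hwp, hpw, (tendsto_add_atTop_iff_nat 1).1 ?_⟩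
    simpa only [hp.sub_pow_succ hwp hpw, sub_self] using hsucc.sub_const p
  · rintro ⟨hwp, hpw, h⟩
    refine (tendsto_add_atTop_iff_nat 1).1 ?_
    simpa only [hp.sub_pow_succ hwp hpw, sub_add_cancel, zero_add] using
      ((tendsto_add_atTop_iff_nat 1).2 h).add_const p

end TopologicalRing

section BanachAlgebra

variable {A : Type*} [NormedRing A] [NormedAlgebra ℂ A] [CompleteSpace A]

theorem spectrum.norm_lt_one_of_tendsto_pow_nhds_zero {a : A}
    (h : Tendsto (a ^ ·) atTop (𝓝 0)) {μ : ℂ} (hμ : μ ∈ spectrum ℂ a) : ‖μ‖ < 1 := by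
  have hbound : ∀ k : ℕ, ‖μ‖ ^ k ≤ ‖a ^ k‖ * ‖(1 : A)‖ := fun k => by
    simpa only [norm_pow] using spectrum.norm_le_norm_mul_of_mem (spectrum.pow_mem_pow a k hμ)
  have hlim : Tendsto (fun k : ℕ => ‖a ^ k‖ * ‖(1 : A)‖) atTop (𝓝 0) := by
    simpa using (tendsto_norm_zero.comp h).mul_const ‖(1 : A)‖
  simpa [abs_norm] using
    tendsto_pow_atTop_nhds_zero_iff.1 (squeeze_zero (fun k => by positivity) hbound hlim)

theorem spectrum.tendsto_pow_nhds_zero_of_spectralRadius_lt_one {a : A}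
    (h : spectralRadius ℂ a < 1) : Tendsto (a ^ ·) atTop (𝓝 0) := by
  obtain ⟨c, hac, hc1⟩ := ENNReal.lt_iff_exists_nnreal_btwn.1 h
  have hbound : ∀ᶠ k : ℕ in atTop, ‖a ^ k‖ ≤ (c : ℝ) ^ k := by
    filter_upwards [(pow_nnnorm_pow_one_div_tendsto_nhds_spectralRadius a).eventually_lt_const hac,
      eventually_ge_atTop 1] with k hk hk1
    rw [one_div, ENNReal.rpow_inv_lt_iff (by positivity), ENNReal.rpow_natCast] at hk
    exact_mod_cast hk.le
  exact squeeze_zero_norm' hbound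
    (tendsto_pow_atTop_nhds_zero_of_lt_one c.2 (by exact_mod_cast hc1))

theorem tendsto_pow_nhds_zero_iff_forall_spectrum_norm_lt_one (a : A) :
    Tendsto (a ^ ·) atTop (𝓝 0) ↔ ∀ μ ∈ spectrum ℂ a, ‖μ‖ < 1 := by
  refine ⟨fun h μ => spectrum.norm_lt_one_of_tendsto_pow_nhds_zero h, fun h => ?_⟩
  rcases subsingleton_or_nontrivial A with hA | hA
  · simpa only [Subsingleton.elim _ (0 : A)] using tendsto_const_nhds
  · refine spectrum.tendsto_pow_nhds_zero_of_spectralRadius_lt_one ?_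
    exact_mod_cast spectrum.spectralRadius_lt_of_forall_lt a (r := 1) fun μ hμ => h μ hμ

end BanachAlgebra

namespace Matrix

variable {n : Type*} [Fintype n] [DecidableEq n]

theorem tendsto_pow_nhds_zero_iff_forall_spectrum_norm_lt_one (A : Matrix n n ℂ) :
    Tendsto (A ^ ·) atTop (𝓝 0) ↔ ∀ μ ∈ spectrum ℂ A, ‖μ‖ < 1 := by
  -- any algebra norm works: the `ℓ∞` operator norm induces the entrywise topology definitionally
  let := Matrix.linftyOpNormedRing (n := n) (α := ℂ)
  let := Matrix.linftyOpNormedAlgebra (n := n) (α := ℂ) (R := ℂ)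
  have : CompleteSpace (Matrix n n ℂ) := FiniteDimensional.complete ℂ _
  exact _root_.tendsto_pow_nhds_zero_iff_forall_spectrum_norm_lt_one A

theorem tendsto_pow_map_ofReal_nhds_zero_iff (B : Matrix n n ℝ) :
    Tendsto ((B.map Complex.ofReal) ^ ·) atTop (𝓝 0) ↔ Tendsto (B ^ ·) atTop (𝓝 0) := by
  have hmap (k : ℕ) : B.map Complex.ofReal ^ k = (B ^ k).map Complex.ofReal :=
    (B.map_pow Complex.ofRealHom k).symm
  rw [(Complex.isometry_ofReal.isEmbedding.isInducing.matrix_map).tendsto_nhds_iff]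
  simp only [hmap, Function.comp_def, Matrix.map_zero _ Complex.ofReal_zero]

theorem nonsing_inv_mul_mul_nonsing_inv {α : Type*} [CommRing α] (A : Matrix n n α) :
    A⁻¹ * A * A⁻¹ = A⁻¹ := by
  by_cases h : IsUnit A.det
  · rw [nonsing_inv_mul A h, one_mul]
  · simp only [nonsing_inv_apply_not_isUnit A h, zero_mul]

theorem isIdempotentElem_mul_nonsing_inv_mul_transpose {m α : Type*} [Fintype m] [CommRing α]
    (U : Matrix m n α) : IsIdempotentElem (U * (Uᵀ * U)⁻¹ * Uᵀ) := by
  calc U * (Uᵀ * U)⁻¹ * Uᵀ * (U * (Uᵀ * U)⁻¹ * Uᵀ)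
      = U * ((Uᵀ * U)⁻¹ * (Uᵀ * U) * (Uᵀ * U)⁻¹) * Uᵀ := by simp only [Matrix.mul_assoc]
    _ = U * (Uᵀ * U)⁻¹ * Uᵀ := by rw [nonsing_inv_mul_mul_nonsing_inv, Matrix.mul_assoc]

end Matrix

theorem projector_convergence_iff_general {N r : ℕ}
    (W : Matrix (Fin N) (Fin N) ℝ)
    (U : Matrix (Fin N) (Fin r) ℝ) :
    Filter.Tendsto (fun k => W ^ k) Filter.atTop
        (nhds (U * (Uᵀ * U)⁻¹ * Uᵀ)) ↔
      (W * (U * (Uᵀ * U)⁻¹ * Uᵀ) = U * (Uᵀ * U)⁻¹ * Uᵀ ∧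
        (U * (Uᵀ * U)⁻¹ * Uᵀ) * W = U * (Uᵀ * U)⁻¹ * Uᵀ ∧
        ∀ μ ∈ spectrum ℂ ((W - U * (Uᵀ * U)⁻¹ * Uᵀ).map Complex.ofReal),
          ‖μ‖ < 1) := by
  rw [U.isIdempotentElem_mul_nonsing_inv_mul_transpose.tendsto_pow_nhds_iff,
    ← Matrix.tendsto_pow_nhds_zero_iff_forall_spectrum_norm_lt_one,
    tendsto_pow_map_ofReal_nhds_zero_iff]

theorem projector_convergence_iff {N r : ℕ}
    (W : Matrix (Fin N) (Fin N) ℝ)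
    (U : Matrix (Fin N) (Fin r) ℝ) (hU : U.rank = r) :
    Filter.Tendsto (fun k => W ^ k) Filter.atTop
        (nhds (U * (Uᵀ * U)⁻¹ * Uᵀ)) ↔
      (W * (U * (Uᵀ * U)⁻¹ * Uᵀ) = U * (Uᵀ * U)⁻¹ * Uᵀ ∧
        (U * (Uᵀ * U)⁻¹ * Uᵀ) * W = U * (Uᵀ * U)⁻¹ * Uᵀ ∧
        ∀ μ ∈ spectrum ℂ ((W - U * (Uᵀ * U)⁻¹ * Uᵀ).map Complex.ofReal),
          ‖μ‖ < 1) :=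
  projector_convergence_iff_general W U
end
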